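/- arXiv:2310.09033 — 3 statements merged into one kernel-verified Lean document; each statement's English description precedes it below -/
import Mathlib

section
/- A regular graph Γ of even valency and order n is distance magic if and only if 0 is an eigenvalue of the adjacency matrix of Γ and there exists an eigenvector for eigenvalue 0 whose entries, after a suitable permutation, form the arithmetic sequence 1−n, 3−n, 5−n, ..., n−3, n−1. -/
/-- The label set `{1-n, 3-n, ..., n-1}`. -/
def zeroLabels (n : ℕ) : Set ℤ := {a : ℤ | ∃ k : ℕ, k < n ∧ a = 2 * k + 1 - n}

/-- The weight of a vertex: the sum of the labels of its neighbors. -/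
noncomputable def wt {V : Type*} (G : SimpleGraph V) (ℓ : V → ℤ) (v : V) : ℤ :=
  ∑ᶠ u ∈ {u | G.Adj v u}, ℓ u

/-- `G` is `r`-regular: every vertex has exactly `r` neighbors. -/
def IsReg {V : Type*} (G : SimpleGraph V) (r : ℕ) : Prop :=
  ∀ v, {u | G.Adj v u}.ncard = r

/-- Distance magic (standard form): a bijective labeling with labels `{1, ..., n}` and
constant vertex weight. -/
def IsDMStd {V : Type*} (G : SimpleGraph V) (n : ℕ) : Prop :=
  ∃ ℓ : V → ℤ, Function.Injective ℓ ∧ Set.range ℓ = Set.Icc (1 : ℤ) (n : ℤ) ∧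
    ∃ κ : ℤ, ∀ v, wt G ℓ v = κ

/-- Distance magic (zero form): a bijective labeling with labels `{1-n, 3-n, ..., n-1}` and
all vertex weights equal to `0`. -/
def IsDMZero {V : Type*} (G : SimpleGraph V) (n : ℕ) : Prop :=
  ∃ ℓ : V → ℤ, Function.Injective ℓ ∧ Set.range ℓ = zeroLabels n ∧ ∀ v, wt G ℓ v = 0

/-- The wreath graph `W n`: vertices `u_i = (i, false)`, `v_i = (i, true)`,
two vertices adjacent iff their indices differ by `1` in `ZMod n`. -/
def wreath (n : ℕ) : SimpleGraph (ZMod n × Bool) where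
  Adj a b := a.1 ≠ b.1 ∧ (b.1 = a.1 + 1 ∨ a.1 = b.1 + 1)
  symm := ⟨by rintro a b ⟨h1, h2⟩; exact ⟨h1.symm, h2.symm⟩⟩
  loopless := ⟨by rintro a ⟨h1, _⟩; exact h1 rfl⟩

/-- One direction of quasi wreath adjacency, with `x_i = (i, false)` and `y_i = (i, true)`. -/
def qwBase {m : ℕ} (s : ZMod m → Bool) (a b : ZMod m × Bool) : Prop :=
  (a.2 = b.2 ∧ b.1 = a.1 + 1) ∨
  (a.2 ≠ b.2 ∧ b.1 = a.1 ∧ (s a.1 = false ∨ s (a.1 - 1) = false)) ∨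
  (a.2 ≠ b.2 ∧ b.1 = a.1 + 1 ∧ s a.1 = true)

/-- The quasi wreath graph `QW(S)` determined by `s : ZMod m → Bool`. -/
def qwGraph (m : ℕ) (s : ZMod m → Bool) : SimpleGraph (ZMod m × Bool) where
  Adj a b := a ≠ b ∧ (qwBase s a b ∨ qwBase s b a)
  symm := ⟨by rintro a b ⟨h1, h2⟩; exact ⟨h1.symm, h2.symm⟩⟩
  loopless := ⟨by rintro a ⟨h1, _⟩; exact h1 rfl⟩

/-- The conditions on the sequence `S` in the construction of quasi wreath graphs:
`m ≥ 3`, `s 0 = 0`, `s (m-1) = 1`, and no two cyclically consecutive entries are `0`. -/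
def qwValid (m : ℕ) (s : ZMod m → Bool) : Prop :=
  3 ≤ m ∧ s 0 = false ∧ s (-1) = true ∧ ∀ i : ZMod m, s i = true ∨ s (i + 1) = true

/-- The block label `ℓ_i = ℓ(x_i) + ℓ(y_i)`. -/
def blockLabel {m : ℕ} (ℓ : ZMod m × Bool → ℤ) (i : ZMod m) : ℤ :=
  ℓ (i, false) + ℓ (i, true)

/-- The blocks `B_{i+1}, ..., B_{i+j}` form a segment of length `j`:
`s i = 0` and `j ≥ 1` is minimal with `s (i+j) = 0`. -/
def IsSegment {m : ℕ} (s : ZMod m → Bool) (i : ZMod m) (j : ℕ) : Prop :=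
  s i = false ∧ 1 ≤ j ∧ s (i + (j : ZMod m)) = false ∧
    ∀ r : ℕ, 1 ≤ r → r < j → s (i + (r : ZMod m)) = true


/-!
Shifting labels by `b ↦ 2b - (n + 1)` maps `{1, …, n}` onto `{1-n, 3-n, …, n-1}` and, in an
`r`-regular graph, changes every vertex weight `w` into `2w - r(n + 1)`. So the shifted labeling
has all weights `0` exactly when the original one has constant weight `r(n + 1)/2`, and this is the
only possible magic constant: double counting gives `n κ = r (1 + ⋯ + n)`.
-/

open Finset Matrix

def centerLabel (n : ℕ) (b : ℤ) : ℤ := 2 * b - (n + 1)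

lemma centerLabel_injective (n : ℕ) : Function.Injective (centerLabel n) := by
  intro a b h
  simp only [centerLabel] at h
  omega

lemma centerLabel_image_Icc (n : ℕ) :
    centerLabel n '' Set.Icc 1 (n : ℤ) = zeroLabels n := by
  ext a
  simp only [centerLabel, zeroLabels, Set.mem_image, Set.mem_Icc]
  constructor
  · rintro ⟨b, ⟨hb1, hb2⟩, rfl⟩
    exact ⟨(b - 1).toNat, by omega, by omega⟩
  · rintro ⟨k, hk, rfl⟩
    exact ⟨k + 1, ⟨by omega, by omega⟩, by ring⟩

lemma sum_Icc_one_mul_two (n : ℕ) : (∑ a ∈ Icc (1 : ℤ) n, a) * 2 = n * (n + 1) := by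
  induction n with
  | zero => simp
  | succ m ih =>
    have h : Icc (1 : ℤ) ((m : ℤ) + 1) = insert ((m : ℤ) + 1) (Icc (1 : ℤ) m) := by
      ext a
      simp only [mem_Icc, mem_insert]
      omega
    push_cast
    rw [h, sum_insert (by simp)]
    linarith

lemma sum_eq_sum_of_injective_of_range_eq {V M : Type*} [Fintype V] [AddCommMonoid M]
    [DecidableEq M] {ℓ : V → M} (hinj : Function.Injective ℓ) {s : Finset M}
    (hrange : Set.range ℓ = s) :
    ∑ v, ℓ v = ∑ a ∈ s, a := by
  have himage : univ.image ℓ = s := by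
    apply coe_injective
    rw [coe_image, coe_univ, Set.image_univ, hrange]
  rw [← himage, sum_image fun a _ b _ h => hinj h]

section Regular

variable {V : Type*} [Fintype V] {G : SimpleGraph V} [DecidableRel G.Adj]

lemma IsReg.isRegularOfDegree {r : ℕ} (hreg : IsReg G r) : G.IsRegularOfDegree r := by
  intro v
  rw [← G.card_neighborSet_eq_degree, ← Nat.card_eq_fintype_card, Nat.card_coe_set_eq]
  exact hreg v

lemma wt_eq_adjMatrix_mulVec (ℓ : V → ℤ) (v : V) : wt G ℓ v = (G.adjMatrix ℤ *ᵥ ℓ) v := by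
  rw [SimpleGraph.adjMatrix_mulVec_apply, wt, ← finsum_mem_coe_finset,
    SimpleGraph.coe_neighborFinset]
  rfl

namespace SimpleGraph.IsRegularOfDegree

variable {r : ℕ} (hreg : G.IsRegularOfDegree r)
include hreg

lemma sum_adjMatrix_mulVec {α : Type*} [Semiring α] (x : V → α) :
    ∑ v, (G.adjMatrix α *ᵥ x) v = r * ∑ v, x v := by
  have hdeg : 1 ᵥ* G.adjMatrix α = fun _ => (r : α) := by
    ext v
    simp [hreg.degree_eq v]
  rw [← one_dotProduct, dotProduct_mulVec, hdeg, mul_sum]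
  rfl

lemma adjMatrix_mulVec_comp_centerLabel (n : ℕ) (ℓ : V → ℤ) (v : V) :
    (G.adjMatrix ℤ *ᵥ (centerLabel n ∘ ℓ)) v = 2 * (G.adjMatrix ℤ *ᵥ ℓ) v - r * (n + 1) := by
  simp only [adjMatrix_mulVec_apply, Function.comp_apply, centerLabel, sum_sub_distrib,
    ← mul_sum, sum_const, card_neighborFinset_eq_degree, hreg.degree_eq v, nsmul_eq_mul]

lemma adjMatrix_mulVec_comp_centerLabel_eq_zero_iff {ℓ : V → ℤ} (hinj : Function.Injective ℓ)
    (hrange : Set.range ℓ = Set.Icc 1 (Fintype.card V : ℤ)) :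
    G.adjMatrix ℤ *ᵥ (centerLabel (Fintype.card V) ∘ ℓ) = 0 ↔
      ∃ κ, ∀ v, (G.adjMatrix ℤ *ᵥ ℓ) v = κ := by
  set n := Fintype.card V
  have hshift := hreg.adjMatrix_mulVec_comp_centerLabel n ℓ
  constructor
  · intro h0
    refine ⟨r * (n + 1) / 2, fun v => Int.eq_ediv_of_mul_eq_right two_ne_zero ?_⟩
    have := hshift v
    rw [h0, Pi.zero_apply] at this
    linarith
  · rintro ⟨κ, hκ⟩
    ext v
    have hn : (n : ℤ) ≠ 0 := by exact_mod_cast (Fintype.card_pos_iff.mpr ⟨v⟩).ne'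
    have hcount : n * κ = r * ∑ v, ℓ v := by
      simpa [hκ] using hreg.sum_adjMatrix_mulVec ℓ
    have hgauss : (∑ v, ℓ v) * 2 = n * (n + 1) := by
      rw [sum_eq_sum_of_injective_of_range_eq hinj (by rw [hrange, coe_Icc])]
      exact sum_Icc_one_mul_two n
    have hκ2 : 2 * κ = r * (n + 1) :=
      mul_left_cancel₀ hn (by linear_combination 2 * hcount + r * hgauss)
    rw [hshift, hκ, hκ2, Pi.zero_apply, sub_self]

end SimpleGraph.IsRegularOfDegree

end Regular

theorem stmt5_general {V : Type*} [Fintype V] (G : SimpleGraph V)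
    [DecidableRel G.Adj] (r : ℕ) (hreg : IsReg G r) :
    IsDMStd G (Fintype.card V) ↔
      ∃ f : V → ℤ, Matrix.mulVec (G.adjMatrix ℤ) f = 0 ∧
        Function.Injective f ∧ Set.range f = zeroLabels (Fintype.card V) := by
  have hreg' := hreg.isRegularOfDegree
  simp only [IsDMStd, wt_eq_adjMatrix_mulVec]
  constructor
  · rintro ⟨ℓ, hinj, hrange, hconst⟩
    refine ⟨centerLabel _ ∘ ℓ, (hreg'.adjMatrix_mulVec_comp_centerLabel_eq_zero_iff hinj hrange).2
      hconst, (centerLabel_injective _).comp hinj, ?_⟩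
    rw [Set.range_comp, hrange, centerLabel_image_Icc]
  · rintro ⟨f, hf0, hinj, hrange⟩
    obtain ⟨ℓ, rfl⟩ : ∃ ℓ, f = centerLabel (Fintype.card V) ∘ ℓ := by
      rw [← Set.range_subset_range_iff_exists_comp, hrange, ← centerLabel_image_Icc]
      exact Set.image_subset_range _ _
    have hrange' : Set.range ℓ = Set.Icc 1 (Fintype.card V : ℤ) :=
      (centerLabel_injective _).image_injective
        (by rw [← Set.range_comp, hrange, centerLabel_image_Icc])
    exact ⟨ℓ, hinj.of_comp, hrange',
      (hreg'.adjMatrix_mulVec_comp_centerLabel_eq_zero_iff hinj.of_comp hrange').1 hf0⟩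

theorem stmt5 {V : Type*} [Fintype V] [DecidableEq V] (G : SimpleGraph V)
    [DecidableRel G.Adj] (r : ℕ) (hr : Even r) (hreg : IsReg G r) :
    IsDMStd G (Fintype.card V) ↔
      ∃ f : V → ℤ, Matrix.mulVec (G.adjMatrix ℤ) f = 0 ∧
        Function.Injective f ∧ Set.range f = zeroLabels (Fintype.card V) :=
  stmt5_general G r hreg
end

section
/- Let QW(S) be a distance magic quasi wreath graph with distance magic labeling ℓ and block labels ℓ_i. Suppose s_{k−i} = 0, s_{k+j} = 0 and s_{k−i+r} = 1 for all 1 ≤ r < i+j (so the blocks B_{k−i+1},...,B_{k+j} form a segment of length i+j). Writing a = ℓ_{k−i+1} and b = ℓ_{k−i+2}, one has ℓ_{k−i+r} = −b, a, b, −a according as r ≡ 0,1,2,3 mod 4 (for 1 ≤ r ≤ i+j), ℓ_{k−i} = −a − 2b, and ℓ_{k+j+1} equals 2a+b, 2b−a, −2a−b, −2b+a according as i+j ≡ 0,1,2,3 mod 4. -/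
/-!
Which cross edges a vertex of block `i` has depends only on `s (i-1)` and `s i`, so the zero
weights of `x_i` and `y_i` give a linear relation between `ℓ_{i-1}`, `ℓ_i` and `ℓ_{i+1}`.
Inside a segment (`s (i-1) = s i = 1`) it reads `ℓ_{i+1} = -ℓ_{i-1}`, which makes the block labels
along the segment run through `a, b, -a, -b` periodically; at the entry (`s (i-1) = 0`) and at the
exit (`s i = 0`) the other two relations determine the blocks just outside the segment.
-/

theorem ZMod.add_one_ne_sub_one {m : ℕ} (hm : 3 ≤ m) (i : ZMod m) : i + 1 ≠ i - 1 := by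
  intro h
  have h₂ : ((2 : ℕ) : ZMod m) = 0 := by push_cast; linear_combination h
  have := Nat.le_of_dvd two_pos ((ZMod.natCast_eq_zero_iff 2 m).mp h₂)
  omega

theorem wt_eq_of_neighbors_eq {V : Type*} {G : SimpleGraph V} (ℓ : V → ℤ) {v A B C D : V}
    (hN : {u | G.Adj v u} = {A, B, C, D}) (hd : [A, B, C, D].Nodup) :
    wt G ℓ v = ℓ A + ℓ B + ℓ C + ℓ D := by
  simp only [List.nodup_cons, List.mem_cons, List.not_mem_nil, or_false, not_or] at hd
  obtain ⟨⟨hAB, hAC, hAD⟩, ⟨hBC, hBD⟩, hCD, -⟩ := hd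
  rw [wt, hN, finsum_mem_insert _ (by simp [hAB, hAC, hAD]) (by simp),
    finsum_mem_insert _ (by simp [hBC, hBD]) (by simp), finsum_mem_pair hCD]
  ring

section Adjacency

variable {m : ℕ} {s : ZMod m → Bool}

theorem qwGraph_adj_iff [Nontrivial (ZMod m)] {i u : ZMod m} {c d : Bool} :
    (qwGraph m s).Adj (i, c) (u, d) ↔
      (u = i + 1 ∧ (d = c ∨ s i = true)) ∨ (u = i - 1 ∧ (d = c ∨ s (i - 1) = true)) ∨
        (u = i ∧ d ≠ c ∧ (s i = false ∨ s (i - 1) = false)) := by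
  have h₁ : i ≠ i + 1 := by simp
  have h₂ : i ≠ i - 1 := (by simp : i - 1 ≠ i).symm
  have h₃ : i = u + 1 ↔ u = i - 1 := by rw [eq_sub_iff_add_eq, eq_comm]
  simp only [qwGraph, qwBase, ne_eq, Prod.mk.injEq, h₃]
  by_cases hu : u = i - 1
  · subst hu
    cases c <;> cases d <;> simp_all [h₂.symm]
  · cases c <;> cases d <;> by_cases hu' : u = i <;> simp_all [@eq_comm _ i u]

theorem qwGraph_neighbors_of_true_true [Nontrivial (ZMod m)] {i : ZMod m} (c : Bool)
    (h₀ : s (i - 1) = true) (h₁ : s i = true) :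
    {u | (qwGraph m s).Adj (i, c) u} = {(i + 1, c), (i - 1, c), (i + 1, !c), (i - 1, !c)} := by
  ext ⟨u, d⟩
  cases c <;> cases d <;> simp [qwGraph_adj_iff, h₀, h₁]

theorem qwGraph_neighbors_of_false_true [Nontrivial (ZMod m)] {i : ZMod m} (c : Bool)
    (h₀ : s (i - 1) = false) (h₁ : s i = true) :
    {u | (qwGraph m s).Adj (i, c) u} = {(i + 1, c), (i - 1, c), (i + 1, !c), (i, !c)} := by
  ext ⟨u, d⟩
  cases c <;> cases d <;> simp [qwGraph_adj_iff, h₀, h₁]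

theorem qwGraph_neighbors_of_true_false [Nontrivial (ZMod m)] {i : ZMod m} (c : Bool)
    (h₀ : s (i - 1) = true) (h₁ : s i = false) :
    {u | (qwGraph m s).Adj (i, c) u} = {(i + 1, c), (i - 1, c), (i - 1, !c), (i, !c)} := by
  ext ⟨u, d⟩
  cases c <;> cases d <;> simp [qwGraph_adj_iff, h₀, h₁]

end Adjacency

section Recursion

variable {m : ℕ} {s : ZMod m → Bool} (hm : 3 ≤ m) {ℓ : ZMod m × Bool → ℤ}
  (hw : ∀ v, wt (qwGraph m s) ℓ v = 0)
include hm hw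

theorem blockLabel_add_one_of_true_true {i : ZMod m} (h₀ : s (i - 1) = true) (h₁ : s i = true) :
    blockLabel ℓ (i + 1) = -blockLabel ℓ (i - 1) := by
  have : Fact (1 < m) := ⟨by omega⟩
  have hx := hw (i, false)
  rw [wt_eq_of_neighbors_eq ℓ (qwGraph_neighbors_of_true_true false h₀ h₁)
    (by simp [ZMod.add_one_ne_sub_one hm])] at hx
  simp only [blockLabel, Bool.not_false] at hx ⊢
  linarith

theorem blockLabel_add_one_of_false_true {i : ZMod m} (h₀ : s (i - 1) = false)
    (h₁ : s i = true) :
    2 * blockLabel ℓ (i + 1) = -(blockLabel ℓ (i - 1) + blockLabel ℓ i) := by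
  have : Fact (1 < m) := ⟨by omega⟩
  have hx := hw (i, false)
  have hy := hw (i, true)
  rw [wt_eq_of_neighbors_eq ℓ (qwGraph_neighbors_of_false_true _ h₀ h₁)
    (by simp [ZMod.add_one_ne_sub_one hm])] at hx hy
  simp only [blockLabel, Bool.not_false, Bool.not_true] at hx hy ⊢
  linarith

theorem blockLabel_add_one_of_true_false {i : ZMod m} (h₀ : s (i - 1) = true)
    (h₁ : s i = false) :
    blockLabel ℓ (i + 1) = -2 * blockLabel ℓ (i - 1) - blockLabel ℓ i := by
  have : Fact (1 < m) := ⟨by omega⟩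
  have hx := hw (i, false)
  have hy := hw (i, true)
  rw [wt_eq_of_neighbors_eq ℓ (qwGraph_neighbors_of_true_false _ h₀ h₁)
    (by simp [ZMod.add_one_ne_sub_one hm])] at hx hy
  simp only [blockLabel, Bool.not_false, Bool.not_true] at hx hy ⊢
  linarith

end Recursion

def segmentPattern (a b : ℤ) (r : ℕ) : ℤ :=
  if r % 4 = 0 then -b else if r % 4 = 1 then a else if r % 4 = 2 then b else -a

theorem segmentPattern_add_two (a b : ℤ) (r : ℕ) :
    segmentPattern a b (r + 2) = -segmentPattern a b r := by
  have h : r % 4 = 0 ∨ r % 4 = 1 ∨ r % 4 = 2 ∨ r % 4 = 3 := by omega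
  rcases h with h | h | h | h <;> simp [segmentPattern, Nat.add_mod, h]

theorem neg_two_mul_segmentPattern_sub (a b : ℤ) (r : ℕ) :
    -2 * segmentPattern a b r - segmentPattern a b (r + 1) =
      if (r + 1) % 4 = 0 then 2 * a + b
      else if (r + 1) % 4 = 1 then 2 * b - a
      else if (r + 1) % 4 = 2 then -(2 * a) - b
      else -(2 * b) + a := by
  have h : r % 4 = 0 ∨ r % 4 = 1 ∨ r % 4 = 2 ∨ r % 4 = 3 := by omega
  rcases h with h | h | h | h <;> simp [segmentPattern, Nat.add_mod, h]

namespace IsSegment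

variable {m : ℕ} {s : ZMod m → Bool} {p : ZMod m} {n : ℕ} (hseg : IsSegment s p n)
include hseg

theorem two_le (hs : ∀ i : ZMod m, s i = true ∨ s (i + 1) = true) : 2 ≤ n := by
  obtain ⟨hp, hn, hpn, -⟩ := hseg
  by_contra! hlt
  obtain rfl : n = 1 := by omega
  rcases hs p with h | h <;> simp_all

variable (hm : 3 ≤ m) {ℓ : ZMod m × Bool → ℤ} (hw : ∀ v, wt (qwGraph m s) ℓ v = 0)
include hm hw

theorem blockLabel_eq_segmentPattern {r : ℕ} (hr : 1 ≤ r) (hrn : r ≤ n) :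
    blockLabel ℓ (p + r) = segmentPattern (blockLabel ℓ (p + 1)) (blockLabel ℓ (p + 2)) r := by
  obtain ⟨-, -, -, hinner⟩ := hseg
  obtain ⟨r, rfl⟩ := Nat.exists_eq_add_of_le' hr
  clear hr
  induction r using Nat.twoStepInduction with
  | zero => simp [segmentPattern]
  | one => simp [segmentPattern]
  | more r ih _ =>
    have hc : p + ((r + 2 : ℕ) : ZMod m) - 1 = p + ((r + 1 : ℕ) : ZMod m) := by push_cast; ring
    have he : p + ((r + 2 : ℕ) : ZMod m) + 1 = p + ((r + 2 + 1 : ℕ) : ZMod m) := by push_cast; ring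
    have hrec := blockLabel_add_one_of_true_true hm hw (i := p + ((r + 2 : ℕ) : ZMod m))
      (by rw [hc]; exact hinner _ (by omega) (by omega)) (hinner _ (by omega) (by omega))
    rw [he, hc, ih (by omega)] at hrec
    rw [hrec, show r + 2 + 1 = r + 1 + 2 by omega, segmentPattern_add_two]

theorem blockLabel_start (hn : 2 ≤ n) :
    blockLabel ℓ p = -blockLabel ℓ (p + 1) - 2 * blockLabel ℓ (p + 2) := by
  obtain ⟨hp, -, -, hinner⟩ := hseg
  have hrec := blockLabel_add_one_of_false_true hm hw (i := p + 1) (by simpa using hp)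
    (by simpa using hinner 1 le_rfl (by omega))
  rw [add_sub_cancel_right, show p + 1 + 1 = p + 2 by ring] at hrec
  linarith

theorem blockLabel_exit (hn : 2 ≤ n) :
    let a := blockLabel ℓ (p + 1)
    let b := blockLabel ℓ (p + 2)
    blockLabel ℓ (p + n + 1) =
      if n % 4 = 0 then 2 * a + b
      else if n % 4 = 1 then 2 * b - a
      else if n % 4 = 2 then -(2 * a) - b
      else -(2 * b) + a := by
  intro a b
  obtain ⟨r, rfl⟩ := Nat.exists_eq_add_of_le' (show 1 ≤ n by omega)
  have hprev := hseg.blockLabel_eq_segmentPattern hm hw (r := r) (by omega) (by omega)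
  have hlast := hseg.blockLabel_eq_segmentPattern hm hw (r := r + 1) (by omega) le_rfl
  obtain ⟨-, -, hpn, hinner⟩ := hseg
  have hc : p + ((r + 1 : ℕ) : ZMod m) - 1 = p + (r : ZMod m) := by push_cast; ring
  have hrec := blockLabel_add_one_of_true_false hm hw (i := p + ((r + 1 : ℕ) : ZMod m))
    (by rw [hc]; exact hinner r (by omega) (by omega)) hpn
  rw [hc, hprev, hlast] at hrec
  rw [hrec, neg_two_mul_segmentPattern_sub]

end IsSegment

theorem stmt8_general (m : ℕ) (s : ZMod m → Bool) (hv : qwValid m s)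
    (ℓ : ZMod m × Bool → ℤ)
    (hw : ∀ v, wt (qwGraph m s) ℓ v = 0)
    (k : ZMod m) (i j : ℕ) (hi : 1 ≤ i)
    (h1 : s (k - (i : ZMod m)) = false) (h2 : s (k + (j : ZMod m)) = false)
    (h3 : ∀ r : ℕ, 1 ≤ r → r < i + j → s (k - (i : ZMod m) + (r : ZMod m)) = true) :
    let a : ℤ := blockLabel ℓ (k - (i : ZMod m) + 1)
    let b : ℤ := blockLabel ℓ (k - (i : ZMod m) + 2)
    (∀ r : ℕ, 1 ≤ r → r ≤ i + j →
      blockLabel ℓ (k - (i : ZMod m) + (r : ZMod m)) =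
        if r % 4 = 0 then -b
        else if r % 4 = 1 then a
        else if r % 4 = 2 then b
        else -a) ∧
    blockLabel ℓ (k - (i : ZMod m)) = -a - 2 * b ∧
    blockLabel ℓ (k + (j : ZMod m) + 1) =
      (if (i + j) % 4 = 0 then 2 * a + b
       else if (i + j) % 4 = 1 then 2 * b - a
       else if (i + j) % 4 = 2 then -(2 * a) - b
       else -(2 * b) + a) := by
  intro a b
  have hend : k - (i : ZMod m) + ((i + j : ℕ) : ZMod m) = k + j := by push_cast; ring
  have hseg : IsSegment s (k - i) (i + j) := ⟨h1, by omega, by rwa [hend], h3⟩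
  have hn := hseg.two_le hv.2.2.2
  refine ⟨fun r => hseg.blockLabel_eq_segmentPattern hv.1 hw,
    hseg.blockLabel_start hv.1 hw hn, ?_⟩
  rw [← hend]
  exact hseg.blockLabel_exit hv.1 hw hn

theorem stmt8 (m : ℕ) (s : ZMod m → Bool) (hv : qwValid m s)
    (ℓ : ZMod m × Bool → ℤ) (hinj : Function.Injective ℓ)
    (hrange : Set.range ℓ = zeroLabels (2 * m))
    (hw : ∀ v, wt (qwGraph m s) ℓ v = 0)
    (k : ZMod m) (i j : ℕ) (hi : 1 ≤ i)
    (h1 : s (k - (i : ZMod m)) = false) (h2 : s (k + (j : ZMod m)) = false)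
    (h3 : ∀ r : ℕ, 1 ≤ r → r < i + j → s (k - (i : ZMod m) + (r : ZMod m)) = true) :
    let a : ℤ := blockLabel ℓ (k - (i : ZMod m) + 1)
    let b : ℤ := blockLabel ℓ (k - (i : ZMod m) + 2)
    (∀ r : ℕ, 1 ≤ r → r ≤ i + j →
      blockLabel ℓ (k - (i : ZMod m) + (r : ZMod m)) =
        if r % 4 = 0 then -b
        else if r % 4 = 1 then a
        else if r % 4 = 2 then b
        else -a) ∧
    blockLabel ℓ (k - (i : ZMod m)) = -a - 2 * b ∧
    blockLabel ℓ (k + (j : ZMod m) + 1) =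
      (if (i + j) % 4 = 0 then 2 * a + b
       else if (i + j) % 4 = 1 then 2 * b - a
       else if (i + j) % 4 = 2 then -(2 * a) - b
       else -(2 * b) + a) :=
  stmt8_general m s hv ℓ hw k i j hi h1 h2 h3
end

section
/- If a quasi wreath graph QW(S) is distance magic, then every segment of QW(S) has odd length; in fact every segment has length congruent to 1 or 3 modulo 4, and the number of segments of length congruent to 1 modulo 4 is even. -/
/-!
Adding and subtracting the conditions at `x_k` and `y_k` gives linear relations between the
block labels `ℓ_i`: `ℓ_{k-1} + ℓ_{k+1} = 0` inside a segment and `2ℓ_{k-1} + ℓ_k + ℓ_{k+1} = 0`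
at a zero `k` of `S`. Along a segment the block labels therefore run through
`A, B, -A, -B, …`, and the vector `(ℓ_{k+1} + ℓ_{k-1}, -ℓ_{k-1})` at a zero `k` is carried to
the next zero by `±[[1,2],[0,1]]` across a segment of odd length `j` and by `±[[1,0],[1,1]]`
across one of even length, the sign being `-1` iff `j ≡ 1, 2 (mod 4)`. By injectivity of the
labelling its first coordinate never vanishes.

Going once around the cycle, the vector is fixed by `±W`, where `W` is a product of these
matrices, hence nonnegative of determinant `1`. Such a `W` has no eigenvalue `-1`, and a fixed
vector with nonzero first coordinate forces `W₁₀ = 0`, which excludes even segments. The total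
sign is then `(-1) ^ #{segments of length ≡ 1 (mod 4)}`, and it must be `+1`.
-/

open Matrix Finset

section ZModThree

variable {m : ℕ}

lemma ZMod.natCast_ne_zero_of_lt {a : ℕ} (h0 : 0 < a) (h : a < m) : (a : ZMod m) ≠ 0 := by
  rw [Ne, ZMod.natCast_eq_zero_iff]
  exact Nat.not_dvd_of_pos_of_lt h0 h

variable (hm : 3 ≤ m) (k : ZMod m)
include hm

lemma ZMod.add_one_ne_self : k + 1 ≠ k := fun h =>
  ZMod.natCast_ne_zero_of_lt (m := m) (a := 1) one_pos (by omega) (by simpa using h)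

lemma ZMod.sub_one_ne_self : k - 1 ≠ k := fun h =>
  ZMod.natCast_ne_zero_of_lt (m := m) (a := 1) one_pos (by omega) (by simpa using h)

lemma ZMod.sub_one_ne_add_one : k - 1 ≠ k + 1 := fun h =>
  ZMod.natCast_ne_zero_of_lt (m := m) (a := 2) two_pos (by omega)
    (by push_cast; linear_combination -h)

end ZModThree

section Weights

variable {m : ℕ} {s : ZMod m → Bool} {ℓ : ZMod m × Bool → ℤ}

lemma qwValid.sub_one_or_self (hv : qwValid m s) (k : ZMod m) :
    s (k - 1) = true ∨ s k = true := by
  simpa using hv.2.2.2 (k - 1)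

lemma qwValid.sub_one_of_eq_false (hv : qwValid m s) {k : ZMod m} (hk : s k = false) :
    s (k - 1) = true := by
  simpa [hk] using hv.sub_one_or_self k

lemma qwValid.add_one_of_eq_false (hv : qwValid m s) {k : ZMod m} (hk : s k = false) :
    s (k + 1) = true := by
  simpa [hk] using hv.2.2.2 k

lemma qwGraph_neighborSet (hm : 3 ≤ m) (k : ZMod m) (hs : s (k - 1) = true ∨ s k = true)
    (b : Bool) :
    {u | (qwGraph m s).Adj (k, b) u} =
      {(k - 1, b), (k + 1, b), (if s (k - 1) then k - 1 else k, !b),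
        (if s k then k + 1 else k, !b)} := by
  have h1 := ZMod.add_one_ne_self hm k
  have h2 := ZMod.sub_one_ne_self hm k
  have h3 := ZMod.sub_one_ne_add_one hm k
  ext ⟨j, c⟩
  simp only [Set.mem_ofPred_eq, qwGraph, qwBase, Set.mem_insert_iff, Set.mem_singleton_iff,
    Prod.mk.injEq]
  cases h₁ : s (k - 1) <;> cases h₂ : s k <;> cases b <;> cases c <;> simp_all <;> grind

lemma wt_qwGraph (hm : 3 ≤ m) (k : ZMod m) (hs : s (k - 1) = true ∨ s k = true) (b : Bool) :
    wt (qwGraph m s) ℓ (k, b) = ℓ (k - 1, b) + ℓ (k + 1, b) +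
      ℓ (if s (k - 1) then k - 1 else k, !b) + ℓ (if s k then k + 1 else k, !b) := by
  have h1 := ZMod.add_one_ne_self hm k
  have h2 := ZMod.sub_one_ne_self hm k
  have h3 := ZMod.sub_one_ne_add_one hm k
  rw [wt, qwGraph_neighborSet hm k hs b, finsum_mem_insert, finsum_mem_insert, finsum_mem_pair,
    add_assoc, add_assoc]
  any_goals exact Set.toFinite _
  all_goals cases h₁ : s (k - 1) <;> cases h₂ : s k <;> simp_all [h1.symm]

variable (hv : qwValid m s) (hw : ∀ v, wt (qwGraph m s) ℓ v = 0)
include hv hw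

lemma blockLabel_neighbors_sum (k : ZMod m) :
    blockLabel ℓ (k - 1) + blockLabel ℓ (k + 1) +
      blockLabel ℓ (if s (k - 1) then k - 1 else k) +
      blockLabel ℓ (if s k then k + 1 else k) = 0 := by
  have hx := wt_qwGraph (ℓ := ℓ) hv.1 k (hv.sub_one_or_self k) false
  have hy := wt_qwGraph (ℓ := ℓ) hv.1 k (hv.sub_one_or_self k) true
  simp only [blockLabel, hw, Bool.not_false, Bool.not_true] at *
  linarith

lemma blockLabel_sub_one_add_blockLabel_add_one {k : ZMod m} (h₁ : s (k - 1) = true)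
    (h₂ : s k = true) : blockLabel ℓ (k - 1) + blockLabel ℓ (k + 1) = 0 := by
  have := blockLabel_neighbors_sum hv hw k
  simp only [h₁, h₂, if_true] at this
  linarith

lemma blockLabel_eq_of_eq_false {k : ZMod m} (hk : s k = false) :
    2 * blockLabel ℓ (k - 1) + blockLabel ℓ k + blockLabel ℓ (k + 1) = 0 := by
  have := blockLabel_neighbors_sum hv hw k
  simp only [hv.sub_one_of_eq_false hk, hk, if_true, Bool.false_eq_true, if_false] at this
  linarith

lemma blockLabel_eq_of_sub_one_eq_false {k : ZMod m} (hk : s (k - 1) = false) :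
    blockLabel ℓ (k - 1) + blockLabel ℓ k + 2 * blockLabel ℓ (k + 1) = 0 := by
  have := blockLabel_neighbors_sum hv hw k
  have h₂ : s k = true := by simpa using hv.add_one_of_eq_false hk
  simp only [h₂, hk, if_true, Bool.false_eq_true, if_false] at this
  linarith

end Weights

section Transfer

variable {m : ℕ} {s : ZMod m → Bool} {ℓ : ZMod m × Bool → ℤ}

lemma alternating_of_add_two {R : Type*} [Ring R] {f : ℕ → R} {N : ℕ}
    (hf : ∀ n, n + 2 ≤ N → f (n + 2) = -f n) (n : ℕ) :
    (2 * n ≤ N → f (2 * n) = (-1) ^ n * f 0) ∧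
      (2 * n + 1 ≤ N → f (2 * n + 1) = (-1) ^ n * f 1) := by
  induction n with
  | zero => simp
  | succ n ih =>
    refine ⟨fun h => ?_, fun h => ?_⟩
    · rw [show 2 * (n + 1) = 2 * n + 2 by ring, hf _ (by omega), ih.1 (by omega), pow_succ,
        mul_neg_one, neg_mul]
    · rw [show 2 * (n + 1) + 1 = 2 * n + 1 + 2 by ring, hf _ (by omega), ih.2 (by omega),
        pow_succ, mul_neg_one, neg_mul]

def segState (ℓ : ZMod m × Bool → ℤ) (k : ZMod m) : Fin 2 → ℤ :=
  ![blockLabel ℓ (k + 1) + blockLabel ℓ (k - 1), -blockLabel ℓ (k - 1)]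

def segMatrix (j : ℕ) : Matrix (Fin 2) (Fin 2) ℤ :=
  if Even j then !![1, 0; 1, 1] else !![1, 2; 0, 1]

lemma IsSegment.two_le_s9 (hv : qwValid m s) {i : ZMod m} {j : ℕ} (hseg : IsSegment s i j) :
    2 ≤ j := by
  by_contra h
  obtain rfl : j = 1 := by have := hseg.2.1; omega
  have h₁ : s (i + 1) = false := by simpa using hseg.2.2.1
  simpa [hseg.1, h₁] using hv.2.2.2 i

variable (hv : qwValid m s) (hw : ∀ v, wt (qwGraph m s) ℓ v = 0)
include hv hw

/-- If the first coordinate vanished, the two equations at the zero `k` would force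
`ℓ(x_{k+1}) = ℓ(x_k)`. -/
lemma segState_zero_ne_zero (hinj : Function.Injective ℓ) {k : ZMod m} (hk : s k = false) :
    segState ℓ k 0 ≠ 0 := by
  intro hC
  have hsum := blockLabel_eq_of_eq_false hv hw hk
  have hx := wt_qwGraph (ℓ := ℓ) hv.1 k (hv.sub_one_or_self k) false
  have hy := wt_qwGraph (ℓ := ℓ) hv.1 k (hv.sub_one_or_self k) true
  simp only [segState, blockLabel, hw, hv.sub_one_of_eq_false hk, hk, if_true,
    Bool.false_eq_true, if_false, Bool.not_false, Bool.not_true, Matrix.cons_val_zero] at *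
  have := congrArg Prod.fst (hinj (show ℓ (k + 1, false) = ℓ (k, false) by linarith))
  exact ZMod.add_one_ne_self hv.1 k this

lemma segState_of_eq_false {k : ZMod m} (hk : s k = false) :
    segState ℓ k = ![-blockLabel ℓ (k - 1) - blockLabel ℓ k, -blockLabel ℓ (k - 1)] := by
  have := blockLabel_eq_of_eq_false hv hw hk
  ext a
  fin_cases a <;> simp [segState]
  linarith

lemma blockLabel_add_two_of_eq_false {k : ZMod m} (hk : s k = false) :
    blockLabel ℓ (k + 1 + 1) = blockLabel ℓ (k - 1) := by
  have h₁ := blockLabel_eq_of_eq_false hv hw hk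
  have h₂ := blockLabel_eq_of_sub_one_eq_false hv hw (k := k + 1) (by simpa using hk)
  rw [add_sub_cancel_right] at h₂
  linarith

lemma IsSegment.blockLabel_add_two {i : ZMod m} {j : ℕ} (hseg : IsSegment s i j) {n : ℕ}
    (hn : n + 3 ≤ j) :
    blockLabel ℓ (i + 1 + (n + 2 : ℕ)) = -blockLabel ℓ (i + 1 + n) := by
  have hin : ∀ r : ℕ, r + 1 < j → s (i + 1 + r) = true := fun r hr => by
    have := hseg.2.2.2 (r + 1) (by omega) hr
    rwa [Nat.cast_succ, add_comm (r : ZMod m) 1, ← add_assoc] at this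
  have e₁ : i + 1 + ((n + 1 : ℕ) : ZMod m) - 1 = i + 1 + n := by push_cast; ring
  have e₂ : i + 1 + ((n + 1 : ℕ) : ZMod m) + 1 = i + 1 + (n + 2 : ℕ) := by push_cast; ring
  have := blockLabel_sub_one_add_blockLabel_add_one hv hw (k := i + 1 + (n + 1 : ℕ))
    (by rw [e₁]; exact hin n (by omega)) (hin (n + 1) (by omega))
  rw [e₁, e₂] at this
  linarith

lemma segState_add_of_isSegment {i : ZMod m} {j : ℕ} (hseg : IsSegment s i j) :
    segState ℓ (i + j) = (-1) ^ ((j + 1) / 2) • (segMatrix j *ᵥ segState ℓ i) := by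
  set f : ℕ → ℤ := fun n => blockLabel ℓ (i + 1 + n) with hf
  have halt := alternating_of_add_two (N := j - 1) (f := f) fun n hn =>
    hseg.blockLabel_add_two hv hw (by omega)
  have hstart : segState ℓ i = ![f 0 + f 1, -f 1] := by
    simp [segState, hf, blockLabel_add_two_of_eq_false hv hw hseg.1]
  rw [hstart, segState_of_eq_false hv hw hseg.2.2.1]
  obtain ⟨n, rfl | rfl⟩ : ∃ n, j = 2 * n + 2 ∨ j = 2 * n + 3 :=
    ⟨(j - 2) / 2, by have := hseg.two_le_s9 hv; omega⟩
  · have hlast : blockLabel ℓ (i + ((2 * n + 2 : ℕ) : ZMod m)) = f (2 * n + 1) := by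
      simp only [hf]; congr 1; push_cast; ring
    have hprev : blockLabel ℓ (i + ((2 * n + 2 : ℕ) : ZMod m) - 1) = f (2 * n) := by
      simp only [hf]; congr 1; push_cast; ring
    rw [hlast, hprev, (halt n).2 (by omega), (halt n).1 (by omega),
      show (2 * n + 2 + 1) / 2 = n + 1 by omega]
    ext a
    fin_cases a <;> simp [segMatrix, show Even (2 * n + 2) from ⟨n + 1, by ring⟩, pow_succ]
    ring
  · have hlast : blockLabel ℓ (i + ((2 * n + 3 : ℕ) : ZMod m)) = f (2 * (n + 1)) := by
      simp only [hf]; congr 1; push_cast; ring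
    have hprev : blockLabel ℓ (i + ((2 * n + 3 : ℕ) : ZMod m) - 1) = f (2 * n + 1) := by
      simp only [hf]; congr 1; push_cast; ring
    rw [hlast, hprev, (halt n).2 (by omega), (halt (n + 1)).1 (by omega),
      show (2 * n + 3 + 1) / 2 = n + 2 by omega]
    ext a
    fin_cases a <;> simp [segMatrix, show ¬Even (2 * n + 3) by simp [parity_simps], pow_succ]
    ring

end Transfer

section NonnegSL2

variable {W : Matrix (Fin 2) (Fin 2) ℤ}

lemma det_segMatrix (j : ℕ) : (segMatrix j).det = 1 := by
  unfold segMatrix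
  split_ifs <;> simp [det_fin_two]

lemma segMatrix_nonneg (j : ℕ) (a b : Fin 2) : 0 ≤ segMatrix j a b := by
  unfold segMatrix
  split_ifs <;> fin_cases a <;> fin_cases b <;> simp

lemma segMatrix_mul_apply_one_zero (j : ℕ) (W : Matrix (Fin 2) (Fin 2) ℤ) :
    (segMatrix j * W) 1 0 = if Even j then W 0 0 + W 1 0 else W 1 0 := by
  unfold segMatrix
  split_ifs <;> simp [mul_apply, Fin.sum_univ_two]

lemma Matrix.diag_pos_of_det_eq_one (hdet : W.det = 1) (hW : ∀ a b, 0 ≤ W a b) :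
    0 < W 0 0 ∧ 0 < W 1 1 := by
  rw [det_fin_two] at hdet
  have := mul_nonneg (hW 0 1) (hW 1 0)
  constructor <;> by_contra! h <;> nlinarith [hW 0 0, hW 1 1]

lemma Matrix.eq_zero_of_mulVec_eq_neg (hdet : W.det = 1) (hW : ∀ a b, 0 ≤ W a b)
    {v : Fin 2 → ℤ} (h : W *ᵥ v = -v) : v = 0 := by
  refine eq_zero_of_mulVec_eq_zero (M := W + 1) ?_
    (by rw [add_mulVec, one_mulVec, h, neg_add_cancel])
  rw [det_fin_two] at hdet ⊢
  simp only [add_apply, one_apply_eq, one_apply_ne zero_ne_one, one_apply_ne one_ne_zero, add_zero]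
  nlinarith [hW 0 0, hW 1 1]

lemma Matrix.apply_zero_eq_zero_of_mulVec_eq_self (hdet : W.det = 1) (hW : ∀ a b, 0 ≤ W a b)
    (h₁₀ : 0 < W 1 0) {v : Fin 2 → ℤ} (h : W *ᵥ v = v) : v 0 = 0 := by
  have h₀ := congrFun h 0
  have h₁ := congrFun h 1
  simp only [mulVec, dotProduct, Fin.sum_univ_two] at h₀ h₁
  obtain ⟨ha, hd⟩ := Matrix.diag_pos_of_det_eq_one hdet hW
  rw [det_fin_two] at hdet
  rcases (show W 1 1 = 1 ∨ 2 ≤ W 1 1 by omega) with hd | hd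
  · rw [hd] at h₁
    have : W 1 0 * v 0 = 0 := by linarith
    exact (mul_eq_zero.mp this).resolve_left h₁₀.ne'
  · have : v 0 * (2 - W 0 0 - W 1 1) = 0 := by
      linear_combination (W 1 1 - 1) * h₀ - W 0 1 * h₁ - v 0 * hdet
    exact (mul_eq_zero.mp this).resolve_right (by omega)

lemma Matrix.even_and_apply_one_zero_eq_zero (hdet : W.det = 1) (hW : ∀ a b, 0 ≤ W a b)
    {e : ℕ} {v : Fin 2 → ℤ} (hv : v 0 ≠ 0) (h : (-1) ^ e • (W *ᵥ v) = v) :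
    Even e ∧ W 1 0 = 0 := by
  rcases Nat.even_or_odd e with he | he
  · rw [he.neg_one_pow, one_smul] at h
    refine ⟨he, ?_⟩
    by_contra h₁₀
    exact hv (Matrix.apply_zero_eq_zero_of_mulVec_eq_self hdet hW
      (lt_of_le_of_ne (hW 1 0) (Ne.symm h₁₀)) h)
  · rw [he.neg_one_pow, neg_one_smul, neg_eq_iff_eq_neg] at h
    exact absurd (congrFun (Matrix.eq_zero_of_mulVec_eq_neg hdet hW h) 0) hv

end NonnegSL2

section Zeros

variable {m : ℕ} {s : ZMod m → Bool}

noncomputable def zeroPos (s : ZMod m → Bool) (r : ℕ) : ℕ :=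
  Nat.nth (fun n : ℕ => s n = false) r

noncomputable def segLen (s : ZMod m → Bool) (r : ℕ) : ℕ :=
  zeroPos s (r + 1) - zeroPos s r

def numSegments (s : ZMod m → Bool) : ℕ :=
  Nat.count (fun n : ℕ => s n = false) m

lemma IsSegment.length_unique {i : ZMod m} {j j' : ℕ} (h : IsSegment s i j)
    (h' : IsSegment s i j') : j = j' := by
  by_contra hne
  rcases Nat.lt_or_gt_of_ne hne with hlt | hlt
  · simpa [h.2.2.1] using h'.2.2.2 j h.2.1 hlt
  · simpa [h'.2.2.1] using h.2.2.2 j' h'.2.1 hlt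

lemma zeroPos_lt {r : ℕ} (hr : r < numSegments s) : zeroPos s r < m :=
  Nat.nth_lt_of_lt_count hr

variable (hv : qwValid m s)
include hv

lemma qwValid.infinite_setOf_eq_false : {n : ℕ | s n = false}.Infinite :=
  Set.infinite_of_forall_exists_gt fun a =>
    ⟨m * (a + 1), by simpa using hv.2.1, by nlinarith [hv.1]⟩

lemma zeroPos_zero : zeroPos s 0 = 0 :=
  Nat.nth_zero_of_zero (by simpa using hv.2.1)

lemma zeroPos_numSegments : zeroPos s (numSegments s) = m :=
  Nat.nth_count (p := fun n : ℕ => s n = false) (by simpa using hv.2.1)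

lemma zeroPos_strictMono : StrictMono (zeroPos s) :=
  Nat.nth_strictMono hv.infinite_setOf_eq_false

lemma zeroPos_add_one (r : ℕ) : zeroPos s (r + 1) = zeroPos s r + segLen s r := by
  have := zeroPos_strictMono hv (Nat.lt_add_one r)
  rw [segLen]
  omega

lemma isSegment_zeroPos (r : ℕ) : IsSegment s (zeroPos s r) (segLen s r) := by
  have hinf := hv.infinite_setOf_eq_false
  have hlt := zeroPos_strictMono hv (Nat.lt_add_one r)
  refine ⟨Nat.nth_mem_of_infinite hinf r, by rw [segLen]; omega, ?_, ?_⟩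
  · rw [← Nat.cast_add, ← zeroPos_add_one hv]
    exact Nat.nth_mem_of_infinite hinf (r + 1)
  · intro n hn₁ hn₂
    by_contra hn
    have : zeroPos s r + n ≤ zeroPos s r :=
      Nat.le_nth_of_lt_nth_succ (show zeroPos s r + n < zeroPos s (r + 1) by
        rw [zeroPos_add_one hv]; omega) (by simpa using hn)
    omega

lemma exists_zeroPos_of_isSegment {i : ZMod m} {j : ℕ} (hseg : IsSegment s i j) :
    ∃ r < numSegments s, (zeroPos s r : ZMod m) = i ∧ segLen s r = j := by
  have : NeZero m := ⟨by have := hv.1; omega⟩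
  have hi : s (i.val : ZMod m) = false := by simpa using hseg.1
  have hpos : zeroPos s (Nat.count (fun n : ℕ => s n = false) i.val) = i.val :=
    Nat.nth_count (p := fun n : ℕ => s n = false) hi
  refine ⟨_, Nat.count_strict_mono hi (ZMod.val_lt i), by simp [hpos], ?_⟩
  have := isSegment_zeroPos hv (Nat.count (fun n : ℕ => s n = false) i.val)
  rw [hpos, ZMod.natCast_zmod_val] at this
  exact this.length_unique hseg

lemma ncard_setOf_isSegment (q : ℕ → Prop) [DecidablePred q] :
    {i : ZMod m | ∃ j, IsSegment s i j ∧ q j}.ncard =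
      #{r ∈ range (numSegments s) | q (segLen s r)} := by
  have hinj : Set.InjOn (fun r => (zeroPos s r : ZMod m)) {r | r < numSegments s} := by
    intro r hr r' hr' h
    have := congrArg ZMod.val h
    simp only [ZMod.val_cast_of_lt (zeroPos_lt hr), ZMod.val_cast_of_lt (zeroPos_lt hr')] at this
    exact (zeroPos_strictMono hv).injective this
  rw [← Set.ncard_coe_finset,
    ← (hinj.mono fun r hr => mem_range.mp (mem_filter.mp hr).1).ncard_image]
  congr 1
  ext i
  simp only [Set.mem_ofPred_eq, coe_filter, mem_range, Set.mem_image]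
  constructor
  · rintro ⟨j, hseg, hq⟩
    obtain ⟨r, hr, rfl, rfl⟩ := exists_zeroPos_of_isSegment hv hseg
    exact ⟨r, ⟨hr, hq⟩, rfl⟩
  · rintro ⟨r, ⟨-, hq⟩, rfl⟩
    exact ⟨_, isSegment_zeroPos hv r, hq⟩

end Zeros

section Cycle

variable {m : ℕ} {s : ZMod m → Bool} {ℓ : ZMod m × Bool → ℤ}
variable (hv : qwValid m s) (hw : ∀ v, wt (qwGraph m s) ℓ v = 0)
include hv hw

lemma segState_zeroPos (r : ℕ) :
    ∃ W : Matrix (Fin 2) (Fin 2) ℤ, W.det = 1 ∧ (∀ a b, 0 ≤ W a b) ∧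
      ((∃ r' < r, Even (segLen s r')) → 0 < W 1 0) ∧
      segState ℓ (zeroPos s r) =
        (-1) ^ (∑ r' ∈ range r, (segLen s r' + 1) / 2) • (W *ᵥ segState ℓ 0) := by
  induction r with
  | zero =>
    refine ⟨1, det_one, fun a b => ?_, by simp, by simp [zeroPos_zero hv]⟩
    by_cases h : a = b <;> simp [one_apply, h]
  | succ r ih =>
    obtain ⟨W, hdet, hW, heven, hstate⟩ := ih
    obtain ⟨hW₀₀, -⟩ := Matrix.diag_pos_of_det_eq_one hdet hW
    refine ⟨segMatrix (segLen s r) * W, by rw [det_mul, det_segMatrix, hdet, one_mul],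
      fun a b => by
        rw [mul_apply]
        exact sum_nonneg fun c _ => mul_nonneg (segMatrix_nonneg _ a c) (hW c b), ?_, ?_⟩
    · rintro ⟨r', hr', hr'even⟩
      rw [segMatrix_mul_apply_one_zero]
      rcases Nat.lt_succ_iff_lt_or_eq.mp hr' with hlt | rfl
      · have := heven ⟨r', hlt, hr'even⟩
        split_ifs <;> linarith [hW 1 0]
      · simp only [hr'even, if_true]
        linarith [hW 1 0]
    · rw [zeroPos_add_one hv, Nat.cast_add,
        segState_add_of_isSegment hv hw (isSegment_zeroPos hv r), hstate, mulVec_smul,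
        mulVec_mulVec, smul_smul, sum_range_succ, pow_add, mul_comm]

lemma segLen_odd_and_even_sum (hinj : Function.Injective ℓ) :
    (∀ r < numSegments s, Odd (segLen s r)) ∧
      Even (∑ r ∈ range (numSegments s), (segLen s r + 1) / 2) := by
  obtain ⟨W, hdet, hW, heven, hcycle⟩ := segState_zeroPos hv hw (numSegments s)
  rw [zeroPos_numSegments hv, ZMod.natCast_self] at hcycle
  obtain ⟨hsum, hW₁₀⟩ := Matrix.even_and_apply_one_zero_eq_zero hdet hW
    (segState_zero_ne_zero hv hw hinj hv.2.1) hcycle.symm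
  refine ⟨fun r hr => Nat.not_even_iff_odd.mp fun h => ?_, hsum⟩
  exact (heven ⟨r, hr, h⟩).ne' hW₁₀

end Cycle

theorem stmt9 (m : ℕ) (s : ZMod m → Bool) (hv : qwValid m s)
    (hdm : IsDMZero (qwGraph m s) (2 * m)) :
    (∀ (i : ZMod m) (j : ℕ), IsSegment s i j → Odd j) ∧
    (∀ (i : ZMod m) (j : ℕ), IsSegment s i j → j % 4 = 1 ∨ j % 4 = 3) ∧
    Even {i : ZMod m | ∃ j : ℕ, IsSegment s i j ∧ j % 4 = 1}.ncard := by
  obtain ⟨ℓ, hinj, -, hw⟩ := hdm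
  obtain ⟨hodd, hsum⟩ := segLen_odd_and_even_sum hv hw hinj
  have hseg_odd : ∀ i j, IsSegment s i j → Odd j := fun i j hseg => by
    obtain ⟨r, hr, -, rfl⟩ := exists_zeroPos_of_isSegment hv hseg
    exact hodd r hr
  refine ⟨hseg_odd, fun i j hseg => ?_, ?_⟩
  · have := Nat.odd_iff.mp (hseg_odd i j hseg)
    omega
  · rw [ncard_setOf_isSegment hv]
    rw [even_sum_iff_even_card_odd] at hsum
    convert hsum using 3 with r hr
    have := Nat.odd_iff.mp (hodd r (mem_range.mp hr))
    rw [Nat.odd_iff]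
    omega
end
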